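/- Let n, K : ℕ with K ≥ 1, let S be a Lagrangian F₂-subspace of V = (F₂×F₂)ⁿ, let φ ∈ ℂ^{F₂ⁿ} be a unit vector admitting a function ε : S → ℂ with E(s)·φ = ε(s)·φ for all s ∈ S, and let t : Fin K → V satisfy t_i + t_j ∉ S for all i ≠ j. Let P = Σ_i ψ_i ψ_iᴴ where ψ_i = E(t_i)·φ, and let C = ⋃_i (t_i + S) ⊆ V. Then for every d : ℕ, the Shor–Laflamme coefficient B_d = (1/K) Σ_{v ∈ V, wt(v) = d} Tr(E(v)·P·E(v)ᴴ·P) equals the distance-distribution coefficient A'_d = (1/(K·2ⁿ)) · #{(c, c') ∈ C × C : wt(c + c') = d} of the classical code C; that is, the Shor–Laflamme weight enumerator B(z) of the CWS quantum code equals the distance enumerator of the associated classical code C. -/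

import Mathlib

/-!
Writing `ψᵢ = E(tᵢ) φ`, the trace `Tr(E(v) P E(v)ᴴ P)` is `Σᵢⱼ |⟨ψⱼ, E(v) ψᵢ⟩|²`, and since Pauli
matrices multiply up to a sign, `|⟨ψⱼ, E(v) ψᵢ⟩| = |⟨φ, E(tⱼ + v + tᵢ) φ⟩|`. This expectation has
modulus one on the stabilizer `S` and vanishes off it: a Lagrangian subspace is its own symplectic
complement, so every `w ∉ S` anticommutes with some `E(s)`, `s ∈ S`, and `E(s)` only rescales `φ`
by a phase. Hence `K · B_d = #{(v, i, j) : wt v = d, tᵢ + v + tⱼ ∈ S}`. On the classical side, the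
cosets `tᵢ + S` are disjoint, so the pairs `(c, c') ∈ C × C` with `c - c' = v` are `|S| = 2ⁿ`
times as many as the pairs `(i, j)` with `tᵢ + v + tⱼ ∈ S`.
-/

open Matrix

/-- The Pauli matrix `E(v)` for `v = (a|b) ∈ (F₂×F₂)ⁿ`: the `2ⁿ × 2ⁿ` complex matrix
with `(x, y)` entry `(-1)^{b·y}` if `x = y + a` and `0` otherwise. -/
def PauliV {n : ℕ} (v : Fin n → ZMod 2 × ZMod 2) :
    Matrix (Fin n → ZMod 2) (Fin n → ZMod 2) ℂ :=
  Matrix.of fun x y =>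
    if x = y + (fun k => (v k).1) then (-1 : ℂ) ^ (∑ k, ((v k).2 * y k).val) else 0

/-- The symplectic inner product `⟨v,v'⟩ = Σ_k (a_k b'_k + a'_k b_k) ∈ F₂`. -/
def sympl {n : ℕ} (v v' : Fin n → ZMod 2 × ZMod 2) : ZMod 2 :=
  ∑ k, ((v k).1 * (v' k).2 + (v' k).1 * (v k).2)

/-- The symplectic weight of `v ∈ (F₂×F₂)ⁿ`: the number of indices `k` with
`v_k ≠ (0,0)`. -/
def swt {n : ℕ} (v : Fin n → ZMod 2 × ZMod 2) : ℕ :=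
  (Finset.univ.filter fun k => v k ≠ 0).card

/-- The outer product `ψψᴴ`, with `(x,y)` entry `ψ_x · conj(ψ_y)`. -/
def outer {N : Type*} (ψ : N → ℂ) : Matrix N N ℂ :=
  Matrix.vecMulVec ψ (star ψ)

section Cosets

variable {G ι : Type*} [AddCommGroup G] {H : AddSubgroup G} [DecidablePred (· ∈ H)]

lemma sum_ite_sub_mem_mul_ite_sub_mem [Fintype G] (a b : G) :
    ∑ c, (if c - a ∈ H then 1 else 0) * (if c - b ∈ H then 1 else 0) =
      if a - b ∈ H then Nat.card H else 0 := by
  simp only [ite_zero_mul_ite_zero, mul_one, Finset.sum_boole]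
  split_ifs with hab
  · have hmem (c : G) : c - a ∈ H ∧ c - b ∈ H ↔ c - a ∈ H := by
      rw [← sub_add_sub_cancel c a b, H.add_mem_cancel_right hab, and_self]
    simp_rw [hmem, Nat.card_eq_fintype_card, Fintype.card_subtype]
    exact Finset.card_bij (fun c _ => c - a) (by simp) (by simp)
      fun h hh => ⟨h + a, by simpa using hh, by simp⟩
  · refine Finset.card_eq_zero.mpr (Finset.filter_eq_empty_iff.mpr fun c _ hc => hab ?_)
    simpa using H.sub_mem hc.2 hc.1

variable [Fintype ι] {t : ι → G}

lemma ite_mem_iUnion_image_add_eq_sum (ht : Pairwise fun i j => t i - t j ∉ H) (c : G)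
    [Decidable (c ∈ ⋃ i, (t i + ·) '' (H : Set G))] :
    (if c ∈ ⋃ i, (t i + ·) '' (H : Set G) then 1 else 0) = ∑ i, if c - t i ∈ H then 1 else 0 := by
  split_ifs with hc
  · obtain ⟨i, h, hh, rfl⟩ := Set.mem_iUnion.mp hc
    rw [Finset.sum_eq_single i]
    · simpa using hh
    · intro j _ hji
      refine if_neg fun hj => ht hji.symm ?_
      simpa [add_sub_right_comm] using H.sub_mem hj hh
    · simp
  · refine (Finset.sum_eq_zero fun i _ => if_neg fun h => hc ?_).symm
    exact Set.mem_iUnion.mpr ⟨i, c - t i, h, add_sub_cancel _ _⟩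

lemma ncard_pairs_mem_iUnion_image_add [Fintype G] (ht : Pairwise fun i j => t i - t j ∉ H)
    (f : G → Prop) [DecidablePred f] :
    {p : G × G | p.1 ∈ ⋃ i, (t i + ·) '' (H : Set G) ∧ p.2 ∈ ⋃ i, (t i + ·) '' (H : Set G) ∧
        f (p.1 - p.2)}.ncard =
      Nat.card H * ∑ v ∈ Finset.univ.filter f, ∑ i, ∑ j, if t i - v - t j ∈ H then 1 else 0 := by
  classical
  set C := ⋃ i, (t i + ·) '' (H : Set G)
  have hpair (y v : G) : (if y + v ∈ C ∧ y ∈ C ∧ f v then 1 else 0) =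
      if f v then (∑ i, if y - (t i - v) ∈ H then 1 else 0) * (∑ j, if y - t j ∈ H then 1 else 0)
        else 0 := by
    simp only [sub_sub_eq_add_sub]
    rw [← ite_mem_iUnion_image_add_eq_sum ht, ← ite_mem_iUnion_image_add_eq_sum ht,
      ite_zero_mul_ite_zero]
    split_ifs <;> tauto
  calc _ = ∑ y, ∑ v, if y + v ∈ C ∧ y ∈ C ∧ f v then 1 else 0 := by
        rw [Set.ncard_eq_toFinset_card', Set.toFinset_ofPred, Finset.card_filter,
          Fintype.sum_prod_type, Finset.sum_comm]
        refine Fintype.sum_congr _ _ fun y => ?_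
        rw [← Equiv.sum_comp (Equiv.addLeft y)]
        simp
    _ = ∑ v, if f v then ∑ i, ∑ j, ∑ y,
        (if y - (t i - v) ∈ H then 1 else 0) * (if y - t j ∈ H then 1 else 0) else 0 := by
        simp only [hpair, Finset.sum_mul_sum]
        rw [Finset.sum_comm]
        refine Fintype.sum_congr _ _ fun v => ?_
        split_ifs
        · rw [Finset.sum_comm]
          exact Fintype.sum_congr _ _ fun i => Finset.sum_comm
        · simp
    _ = _ := by
        simp only [sum_ite_sub_mem_mul_ite_sub_mem]
        simp only [Finset.sum_filter, Finset.mul_sum, mul_ite, mul_one, mul_zero]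

end Cosets

lemma star_mulVec_dotProduct_mulVec {N : Type*} [Fintype N] (A B : Matrix N N ℂ) (u w : N → ℂ) :
    star (A *ᵥ u) ⬝ᵥ B *ᵥ w = star u ⬝ᵥ (Aᴴ * B) *ᵥ w := by
  rw [star_mulVec, ← dotProduct_mulVec, mulVec_mulVec]

lemma trace_mul_outer_mul_conjTranspose_mul_outer {N : Type*} [Fintype N]
    (A : Matrix N N ℂ) (u w : N → ℂ) :
    (A * outer u * Aᴴ * outer w).trace = star (star w ⬝ᵥ A *ᵥ u) * (star w ⬝ᵥ A *ᵥ u) := by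
  rw [outer, outer, mul_vecMulVec A, vecMulVec_mul, ← star_mulVec, vecMulVec_mul_vecMulVec,
    trace_vecMulVec, dotProduct_smul, smul_eq_mul, star_dotProduct, dotProduct_comm (A *ᵥ u)]

noncomputable def χ : AddChar (ZMod 2) ℂ where
  toFun c := (-1) ^ c.val
  map_zero_eq_one' := rfl
  map_add_eq_mul' a b := by
    rw [ZMod.val_add, ← neg_one_pow_eq_pow_mod_two, pow_add]

lemma χ_apply (c : ZMod 2) : χ c = (-1) ^ c.val := rfl

lemma χ_one : χ 1 = -1 := by simp [χ_apply, ZMod.val_one]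

lemma χ_mul_self (c : ZMod 2) : χ c * χ c = 1 := by
  rw [← AddChar.map_add_eq_mul, CharTwo.add_self_eq_zero, AddChar.map_zero_eq_one]

@[simp] lemma star_χ (c : ZMod 2) : star (χ c) = χ c := by simp [χ_apply]

lemma neg_one_pow_sum_val {ι : Type*} (s : Finset ι) (f : ι → ZMod 2) :
    (-1 : ℂ) ^ (∑ k ∈ s, (f k).val) = χ (∑ k ∈ s, f k) := by
  have hcast : ∑ k ∈ s, f k = ((∑ k ∈ s, (f k).val : ℕ) : ZMod 2) := by
    push_cast [ZMod.natCast_val, ZMod.cast_id']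
    rfl
  rw [hcast, χ_apply, ZMod.val_natCast, ← neg_one_pow_eq_pow_mod_two]

section Pauli

variable {n : ℕ}

def xPart (v : Fin n → ZMod 2 × ZMod 2) : Fin n → ZMod 2 := fun k => (v k).1

def zPart (v : Fin n → ZMod 2 × ZMod 2) : Fin n → ZMod 2 := fun k => (v k).2

@[simp] lemma xPart_zero : xPart (0 : Fin n → ZMod 2 × ZMod 2) = 0 := rfl

@[simp] lemma zPart_zero : zPart (0 : Fin n → ZMod 2 × ZMod 2) = 0 := rfl

@[simp] lemma xPart_add (v w : Fin n → ZMod 2 × ZMod 2) : xPart (v + w) = xPart v + xPart w := rfl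

@[simp] lemma zPart_add (v w : Fin n → ZMod 2 × ZMod 2) : zPart (v + w) = zPart v + zPart w := rfl

@[simp] lemma xPart_smul (c : ZMod 2) (v : Fin n → ZMod 2 × ZMod 2) :
    xPart (c • v) = c • xPart v := rfl

@[simp] lemma zPart_smul (c : ZMod 2) (v : Fin n → ZMod 2 × ZMod 2) :
    zPart (c • v) = c • zPart v := rfl

lemma PauliV_apply (v : Fin n → ZMod 2 × ZMod 2) (x y : Fin n → ZMod 2) :
    PauliV v x y = if x = y + xPart v then χ (zPart v ⬝ᵥ y) else 0 := by
  simp only [PauliV, of_apply, neg_one_pow_sum_val]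
  rfl

@[simp] lemma PauliV_zero : PauliV (0 : Fin n → ZMod 2 × ZMod 2) = 1 := by
  ext x y
  simp [PauliV_apply, one_apply]

lemma PauliV_mul (v w : Fin n → ZMod 2 × ZMod 2) :
    PauliV v * PauliV w = χ (zPart v ⬝ᵥ xPart w) • PauliV (v + w) := by
  ext x y
  rw [mul_apply, Finset.sum_eq_single (y + xPart w)]
  · simp only [PauliV_apply, Matrix.smul_apply, smul_eq_mul, if_true, xPart_add, zPart_add,
      add_assoc, ite_mul, zero_mul, mul_ite, mul_zero, add_comm (xPart v)]
    refine if_congr Iff.rfl ?_ rfl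
    rw [dotProduct_add, add_dotProduct, AddChar.map_add_eq_mul, AddChar.map_add_eq_mul]
    ring
  · intro z _ hz
    simp [PauliV_apply w z y, hz]
  · simp

lemma conjTranspose_PauliV (v : Fin n → ZMod 2 × ZMod 2) :
    (PauliV v)ᴴ = χ (zPart v ⬝ᵥ xPart v) • PauliV v := by
  ext x y
  rw [conjTranspose_apply, Matrix.smul_apply, PauliV_apply, PauliV_apply, smul_eq_mul]
  by_cases h : x = y + xPart v
  · subst h
    simp [add_assoc, ZModModule.add_self, dotProduct_add, AddChar.map_add_eq_mul, mul_comm]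
  · have h' : ¬ y = x + xPart v := fun h' =>
      h (by rw [h', add_assoc, ZModModule.add_self, add_zero])
    simp [h, h']

lemma conjTranspose_PauliV_mul_self (v : Fin n → ZMod 2 × ZMod 2) :
    (PauliV v)ᴴ * PauliV v = 1 := by
  rw [conjTranspose_PauliV, smul_mul_assoc, PauliV_mul, smul_smul, χ_mul_self, one_smul,
    ZModModule.add_self, PauliV_zero]

lemma exists_conjTranspose_PauliV_mul_mul (u v w : Fin n → ZMod 2 × ZMod 2) :
    ∃ e, (PauliV u)ᴴ * PauliV v * PauliV w = χ e • PauliV (u + v + w) := by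
  rw [conjTranspose_PauliV, smul_mul_assoc, PauliV_mul, smul_mul_assoc, smul_mul_assoc, PauliV_mul,
    smul_smul, smul_smul, ← AddChar.map_add_eq_mul, ← AddChar.map_add_eq_mul]
  exact ⟨_, rfl⟩

lemma sympl_eq_dotProduct (v w : Fin n → ZMod 2 × ZMod 2) :
    sympl v w = xPart v ⬝ᵥ zPart w + xPart w ⬝ᵥ zPart v :=
  Finset.sum_add_distrib

lemma sympl_comm (v w : Fin n → ZMod 2 × ZMod 2) : sympl v w = sympl w v := by
  rw [sympl_eq_dotProduct, sympl_eq_dotProduct, add_comm]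

lemma PauliV_mul_comm (v w : Fin n → ZMod 2 × ZMod 2) :
    PauliV v * PauliV w = χ (sympl v w) • (PauliV w * PauliV v) := by
  rw [PauliV_mul, PauliV_mul, smul_smul, ← AddChar.map_add_eq_mul, add_comm w, sympl_eq_dotProduct,
    dotProduct_comm (xPart v), add_comm (zPart w ⬝ᵥ xPart v), add_assoc, CharTwo.add_self_eq_zero,
    add_zero, dotProduct_comm]

lemma conjTranspose_PauliV_mul_mul_self (v w : Fin n → ZMod 2 × ZMod 2) :
    (PauliV w)ᴴ * PauliV v * PauliV w = χ (sympl v w) • PauliV v := by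
  rw [mul_assoc, PauliV_mul_comm, mul_smul_comm, ← mul_assoc, conjTranspose_PauliV_mul_self,
    one_mul]

variable (n) in
def symplForm : LinearMap.BilinForm (ZMod 2) (Fin n → ZMod 2 × ZMod 2) :=
  LinearMap.mk₂ (ZMod 2) sympl
    (fun _ _ _ => by
      simp only [sympl_eq_dotProduct, xPart_add, zPart_add, add_dotProduct, dotProduct_add]; ring)
    (fun _ _ _ => by
      simp only [sympl_eq_dotProduct, xPart_smul, zPart_smul, smul_dotProduct, dotProduct_smul,
        smul_eq_mul]; ring)
    (fun _ _ _ => by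
      simp only [sympl_eq_dotProduct, xPart_add, zPart_add, add_dotProduct, dotProduct_add]; ring)
    (fun _ _ _ => by
      simp only [sympl_eq_dotProduct, xPart_smul, zPart_smul, smul_dotProduct, dotProduct_smul,
        smul_eq_mul]; ring)

lemma symplForm_apply (v w : Fin n → ZMod 2 × ZMod 2) : symplForm n v w = sympl v w := rfl

lemma symplForm_isRefl : (symplForm n).IsRefl := fun v w h => by
  rwa [symplForm_apply, sympl_comm]

lemma symplForm_nondegenerate : (symplForm n).Nondegenerate := by
  refine symplForm_isRefl.nondegenerate_iff_separatingLeft.mpr fun v hv => funext fun k => ?_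
  have hx : (v k).1 = 0 := by
    simpa [symplForm_apply, sympl, Pi.single_apply, apply_ite] using hv (Pi.single k (0, 1))
  have hz : (v k).2 = 0 := by
    simpa [symplForm_apply, sympl, Pi.single_apply, apply_ite] using hv (Pi.single k (1, 0))
  exact Prod.ext hx hz

lemma exists_mem_sympl_eq_one_of_notMem {S : Submodule (ZMod 2) (Fin n → ZMod 2 × ZMod 2)}
    (hiso : ∀ s ∈ S, ∀ s' ∈ S, sympl s s' = 0) (hdim : Module.finrank (ZMod 2) S = n)
    {w : Fin n → ZMod 2 × ZMod 2} (hw : w ∉ S) : ∃ s ∈ S, sympl s w = 1 := by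
  have hle : S ≤ (symplForm n).orthogonal S := fun s hs s' hs' => hiso s' hs' s hs
  have hself : (symplForm n).orthogonal S = S := by
    refine (Submodule.eq_of_le_of_finrank_le hle ?_).symm
    rw [LinearMap.BilinForm.finrank_orthogonal symplForm_nondegenerate, hdim,
      Module.finrank_pi_fintype]
    simp only [Module.finrank_prod, Module.finrank_self, Finset.sum_const, Finset.card_univ,
      Fintype.card_fin, smul_eq_mul]
    omega
  by_contra! h
  exact hw (hself ▸ fun s hs => (by decide : ∀ c : ZMod 2, c ≠ 1 → c = 0) _ (h s hs))

noncomputable def pauliExpect (φ : (Fin n → ZMod 2) → ℂ) (w : Fin n → ZMod 2 × ZMod 2) : ℂ :=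
  star φ ⬝ᵥ PauliV w *ᵥ φ

variable {S : Submodule (ZMod 2) (Fin n → ZMod 2 × ZMod 2)} {φ : (Fin n → ZMod 2) → ℂ}
  {ε : S → ℂ}

lemma star_eigenvalue_mul_self (hunit : ∑ x, star (φ x) * φ x = 1)
    (hε : ∀ s : S, (PauliV (s : Fin n → ZMod 2 × ZMod 2)).mulVec φ = ε s • φ) (s : S) :
    star (ε s) * ε s = 1 := by
  have h := star_mulVec_dotProduct_mulVec (PauliV s) (PauliV s) φ φ
  rwa [conjTranspose_PauliV_mul_self, one_mulVec, hε, star_smul, smul_dotProduct,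
    dotProduct_smul, smul_eq_mul, smul_eq_mul, show star φ ⬝ᵥ φ = 1 from hunit, mul_one] at h

lemma pauliExpect_coe (hunit : ∑ x, star (φ x) * φ x = 1)
    (hε : ∀ s : S, (PauliV (s : Fin n → ZMod 2 × ZMod 2)).mulVec φ = ε s • φ) (s : S) :
    pauliExpect φ s = ε s := by
  rw [pauliExpect, hε, dotProduct_smul, show star φ ⬝ᵥ φ = 1 from hunit, smul_eq_mul, mul_one]

lemma pauliExpect_eq_zero_of_notMem (hiso : ∀ s ∈ S, ∀ s' ∈ S, sympl s s' = 0)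
    (hdim : Module.finrank (ZMod 2) S = n) (hunit : ∑ x, star (φ x) * φ x = 1)
    (hε : ∀ s : S, (PauliV (s : Fin n → ZMod 2 × ZMod 2)).mulVec φ = ε s • φ)
    {w : Fin n → ZMod 2 × ZMod 2} (hw : w ∉ S) : pauliExpect φ w = 0 := by
  obtain ⟨s, hs, hsw⟩ := exists_mem_sympl_eq_one_of_notMem hiso hdim hw
  refine self_eq_neg.mp ?_
  calc pauliExpect φ w
      = star (PauliV s *ᵥ φ) ⬝ᵥ PauliV w *ᵥ (PauliV s *ᵥ φ) := by
        rw [hε ⟨s, hs⟩, star_smul, mulVec_smul, smul_dotProduct, dotProduct_smul, smul_smul,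
          star_eigenvalue_mul_self hunit hε, one_smul, pauliExpect]
    _ = star φ ⬝ᵥ ((PauliV s)ᴴ * PauliV w * PauliV s) *ᵥ φ := by
        rw [star_mulVec_dotProduct_mulVec, mulVec_mulVec]
    _ = -pauliExpect φ w := by
        rw [conjTranspose_PauliV_mul_mul_self, sympl_comm, hsw, χ_one, neg_one_smul, neg_mulVec,
          dotProduct_neg, pauliExpect]

lemma star_pauliExpect_mul_self [DecidablePred (· ∈ S)]
    (hiso : ∀ s ∈ S, ∀ s' ∈ S, sympl s s' = 0)
    (hdim : Module.finrank (ZMod 2) S = n) (hunit : ∑ x, star (φ x) * φ x = 1)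
    (hε : ∀ s : S, (PauliV (s : Fin n → ZMod 2 × ZMod 2)).mulVec φ = ε s • φ)
    (w : Fin n → ZMod 2 × ZMod 2) :
    star (pauliExpect φ w) * pauliExpect φ w = if w ∈ S then 1 else 0 := by
  split_ifs with hw
  · exact pauliExpect_coe hunit hε ⟨w, hw⟩ ▸ star_eigenvalue_mul_self hunit hε ⟨w, hw⟩
  · rw [pauliExpect_eq_zero_of_notMem hiso hdim hunit hε hw, mul_zero]

lemma trace_PauliV_mul_mul_conjTranspose_mul [DecidablePred (· ∈ S)] {ι : Type*} [Fintype ι]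
    (hiso : ∀ s ∈ S, ∀ s' ∈ S, sympl s s' = 0)
    (hdim : Module.finrank (ZMod 2) S = n) (hunit : ∑ x, star (φ x) * φ x = 1)
    (hε : ∀ s : S, (PauliV (s : Fin n → ZMod 2 × ZMod 2)).mulVec φ = ε s • φ)
    (t : ι → Fin n → ZMod 2 × ZMod 2) (v : Fin n → ZMod 2 × ZMod 2) :
    (PauliV v * (∑ i, outer (PauliV (t i) *ᵥ φ)) * (PauliV v)ᴴ *
        ∑ i, outer (PauliV (t i) *ᵥ φ)).trace =
      ∑ i, ∑ j, if t i + v + t j ∈ S then 1 else 0 := by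
  simp only [Matrix.mul_sum, Matrix.sum_mul, trace_sum,
    trace_mul_outer_mul_conjTranspose_mul_outer]
  refine Fintype.sum_congr _ _ fun i => Fintype.sum_congr _ _ fun j => ?_
  obtain ⟨e, he⟩ := exists_conjTranspose_PauliV_mul_mul (t i) v (t j)
  rw [star_mulVec_dotProduct_mulVec, mulVec_mulVec, he, smul_mulVec, dotProduct_smul,
    smul_eq_mul, star_mul', star_χ, mul_mul_mul_comm, χ_mul_self, one_mul, ← pauliExpect,
    star_pauliExpect_mul_self hiso hdim hunit hε]

end Pauli

theorem cws_B_enumerator_eq_distance_enumerator_general {n K : ℕ}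
    (S : Submodule (ZMod 2) (Fin n → ZMod 2 × ZMod 2))
    (hiso : ∀ s ∈ S, ∀ s' ∈ S, sympl s s' = 0)
    (hdim : Module.finrank (ZMod 2) S = n)
    (φ : (Fin n → ZMod 2) → ℂ) (hunit : ∑ x, star (φ x) * φ x = 1)
    (ε : S → ℂ) (hε : ∀ s : S, (PauliV (s : Fin n → ZMod 2 × ZMod 2)).mulVec φ = ε s • φ)
    (t : Fin K → (Fin n → ZMod 2 × ZMod 2))
    (ht : ∀ i j, i ≠ j → t i + t j ∉ S)
    (P : Matrix (Fin n → ZMod 2) (Fin n → ZMod 2) ℂ)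
    (hP : P = ∑ i, outer ((PauliV (t i)).mulVec φ))
    (C : Set (Fin n → ZMod 2 × ZMod 2))
    (hC : C = ⋃ i, (fun s => t i + s) '' (S : Set (Fin n → ZMod 2 × ZMod 2)))
    (d : ℕ) :
    (1 / (K : ℂ)) *
        ∑ v ∈ Finset.univ.filter (fun v : Fin n → ZMod 2 × ZMod 2 => swt v = d),
          (PauliV v * P * (PauliV v)ᴴ * P).trace =
      (1 / ((K : ℂ) * 2 ^ n)) *
        ({p : (Fin n → ZMod 2 × ZMod 2) × (Fin n → ZMod 2 × ZMod 2) |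
            p.1 ∈ C ∧ p.2 ∈ C ∧ swt (p.1 + p.2) = d}.ncard : ℂ) := by
  classical
  have hcard : Nat.card S = 2 ^ n := by
    rw [Module.natCard_eq_pow_finrank (K := ZMod 2), Nat.card_zmod, hdim]
  have ht' : Pairwise fun i j => t i - t j ∉ S.toAddSubgroup := fun i j hij => by
    simpa [ZModModule.sub_eq_add] using ht i j hij
  have hcount := ncard_pairs_mem_iUnion_image_add ht' (fun v => swt v = d)
  simp only [ZModModule.sub_eq_add, Submodule.coe_toAddSubgroup,
    Submodule.mem_toAddSubgroup] at hcount
  subst hP hC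
  rw [hcount, hcard,
    Finset.sum_congr rfl fun v _ => trace_PauliV_mul_mul_conjTranspose_mul hiso hdim hunit hε t v]
  push_cast
  field_simp

/-- The Shor–Laflamme weight enumerator `B(z)` of a CWS quantum code equals the distance
enumerator of the associated classical code `C = ⋃_i (t_i + S)`: for every `d`,
`B_d = (1/K) Σ_{wt(v)=d} Tr(E(v)·P·E(v)ᴴ·P)` equals
`A'_d = (1/(K·2ⁿ)) · #{(c,c') ∈ C × C : wt(c + c') = d}`. -/
theorem cws_B_enumerator_eq_distance_enumerator {n K : ℕ} (hK : 1 ≤ K)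
    (S : Submodule (ZMod 2) (Fin n → ZMod 2 × ZMod 2))
    (hiso : ∀ s ∈ S, ∀ s' ∈ S, sympl s s' = 0)
    (hdim : Module.finrank (ZMod 2) S = n)
    (φ : (Fin n → ZMod 2) → ℂ) (hunit : ∑ x, star (φ x) * φ x = 1)
    (ε : S → ℂ) (hε : ∀ s : S, (PauliV (s : Fin n → ZMod 2 × ZMod 2)).mulVec φ = ε s • φ)
    (t : Fin K → (Fin n → ZMod 2 × ZMod 2))
    (ht : ∀ i j, i ≠ j → t i + t j ∉ S)
    (P : Matrix (Fin n → ZMod 2) (Fin n → ZMod 2) ℂ)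
    (hP : P = ∑ i, outer ((PauliV (t i)).mulVec φ))
    (C : Set (Fin n → ZMod 2 × ZMod 2))
    (hC : C = ⋃ i, (fun s => t i + s) '' (S : Set (Fin n → ZMod 2 × ZMod 2)))
    (d : ℕ) :
    (1 / (K : ℂ)) *
        ∑ v ∈ Finset.univ.filter (fun v : Fin n → ZMod 2 × ZMod 2 => swt v = d),
          (PauliV v * P * (PauliV v)ᴴ * P).trace =
      (1 / ((K : ℂ) * 2 ^ n)) *
        ({p : (Fin n → ZMod 2 × ZMod 2) × (Fin n → ZMod 2 × ZMod 2) |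
            p.1 ∈ C ∧ p.2 ∈ C ∧ swt (p.1 + p.2) = d}.ncard : ℂ) :=
  cws_B_enumerator_eq_distance_enumerator_general S hiso hdim φ hunit ε hε t ht P hP C hC d
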